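/- Let A = M − N be a splitting of A ∈ ℝ^{n×n}, let B ∈ ℝ^{n×n}, b ∈ ℝⁿ, θ ∈ [0,1), and let Ω ∈ ℝ^{n×n} be such that Ω + M is invertible. Suppose F(x*) = 0 and let {x^k} be any sequence in ℝⁿ satisfying ‖(Ω+M)x^{k+1} − [(Ω+N)x^k + B|x^k| + b]‖ ≤ θ‖F(x^k)‖ for all k ≥ 0. Then ‖x^{k+1} − x*‖ ≤ ‖(Ω+M)^{-1}‖·[θ(‖Ω+M‖ + ‖Ω+N‖ + ‖B‖) + ‖Ω+N‖ + ‖B‖]·‖x^k − x*‖ for all k ≥ 0. Moreover, if ‖(Ω+M)^{-1}‖ < 1/[θ(‖Ω+M‖ + ‖Ω+N‖ + ‖B‖) + ‖Ω+N‖ + ‖B‖], then {x^k} converges linearly to x* from any starting point x^0. -/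

import Mathlib

open Matrix Filter

/-- Componentwise absolute value of a vector in Euclidean space. -/
noncomputable def vabs {n : ℕ} (x : EuclideanSpace ℝ (Fin n)) : EuclideanSpace ℝ (Fin n) :=
  WithLp.toLp 2 (fun i => |x i|)

/-- A matrix acting on Euclidean space (so that vector norms are the Euclidean 2-norm). -/
noncomputable def mulV {n : ℕ} (M : Matrix (Fin n) (Fin n) ℝ) (x : EuclideanSpace ℝ (Fin n)) :
    EuclideanSpace ℝ (Fin n) :=
  Matrix.toEuclideanCLM (𝕜 := ℝ) M x

/-- Spectral norm of a real matrix: the operator norm induced by the Euclidean vector norm. -/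
noncomputable def spec {n : ℕ} (M : Matrix (Fin n) (Fin n) ℝ) : ℝ :=
  ‖Matrix.toEuclideanCLM (𝕜 := ℝ) M‖

/-- The GAVE residual function `F(x) = A x − B |x| − b`. -/
noncomputable def gaveF {n : ℕ} (A B : Matrix (Fin n) (Fin n) ℝ)
    (b : EuclideanSpace ℝ (Fin n)) (x : EuclideanSpace ℝ (Fin n)) : EuclideanSpace ℝ (Fin n) :=
  mulV A x - mulV B (vabs x) - b

/-- The AVE residual function `A x − |x| − b` (the GAVE with `B = I`). -/
noncomputable def aveF {n : ℕ} (A : Matrix (Fin n) (Fin n) ℝ)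
    (b : EuclideanSpace ℝ (Fin n)) (x : EuclideanSpace ℝ (Fin n)) : EuclideanSpace ℝ (Fin n) :=
  mulV A x - vabs x - b

/-- A sequence converges linearly to `xs`: the distances to `xs` contract by a fixed
factor `c < 1` at every step, and the sequence tends to `xs`. -/
def ConvergesLinearlyTo {n : ℕ} (x : ℕ → EuclideanSpace ℝ (Fin n))
    (xs : EuclideanSpace ℝ (Fin n)) : Prop :=
  (∃ c : ℝ, 0 ≤ c ∧ c < 1 ∧ ∀ k : ℕ, ‖x (k + 1) - xs‖ ≤ c * ‖x k - xs‖) ∧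
    Tendsto x atTop (nhds xs)

/-!
Subtracting the fixed-point identity `(Ω + M) x* = (Ω + N) x* + B |x*| + b` from an inexact step
writes `(Ω + M) (x^{k+1} - x*)` as the step's residual plus `(Ω + N) (x^k - x*) + B (|x^k| - |x*|)`.
The residual is at most `θ ‖F(x^k)‖ = θ ‖F(x^k) - F(x*)‖ ≤ θ (‖Ω + M‖ + ‖Ω + N‖ + ‖B‖) ‖x^k - x*‖`,
because `|·|` is 1-Lipschitz; applying `(Ω + M)⁻¹` gives the one-step estimate, and when its
factor is below `1` the errors decay geometrically.
-/

section Euclidean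

variable {n : ℕ}

lemma mulV_sub_left (P Q : Matrix (Fin n) (Fin n) ℝ) (x : EuclideanSpace ℝ (Fin n)) :
    mulV (P - Q) x = mulV P x - mulV Q x := by
  simp [mulV]

lemma mulV_sub (P : Matrix (Fin n) (Fin n) ℝ) (x y : EuclideanSpace ℝ (Fin n)) :
    mulV P (x - y) = mulV P x - mulV P y :=
  map_sub _ x y

lemma mulV_nonsing_inv_mulV (P : Matrix (Fin n) (Fin n) ℝ) (hP : IsUnit P)
    (x : EuclideanSpace ℝ (Fin n)) : mulV P⁻¹ (mulV P x) = x := by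
  have hPP : P⁻¹ * P = 1 := Matrix.nonsing_inv_mul P ((Matrix.isUnit_iff_isUnit_det P).mp hP)
  rw [mulV, mulV, ← ContinuousLinearMap.comp_apply, ← ContinuousLinearMap.mul_def, ← map_mul, hPP,
    map_one, one_apply_eq_self]

lemma spec_nonneg (P : Matrix (Fin n) (Fin n) ℝ) : 0 ≤ spec P :=
  norm_nonneg _

lemma norm_mulV_le (P : Matrix (Fin n) (Fin n) ℝ) (x : EuclideanSpace ℝ (Fin n)) :
    ‖mulV P x‖ ≤ spec P * ‖x‖ :=
  (Matrix.toEuclideanCLM (𝕜 := ℝ) P).le_opNorm x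

lemma norm_vabs_sub_vabs_le (x y : EuclideanSpace ℝ (Fin n)) :
    ‖vabs x - vabs y‖ ≤ ‖x - y‖ := by
  rw [EuclideanSpace.norm_eq, EuclideanSpace.norm_eq]
  gcongr with i
  simpa [vabs] using abs_abs_sub_abs_le_abs_sub (x i) (y i)

lemma norm_mulV_vabs_sub_vabs_le (P : Matrix (Fin n) (Fin n) ℝ) (x y : EuclideanSpace ℝ (Fin n)) :
    ‖mulV P (vabs x - vabs y)‖ ≤ spec P * ‖x - y‖ :=
  (norm_mulV_le P _).trans (mul_le_mul_of_nonneg_left (norm_vabs_sub_vabs_le x y) (spec_nonneg P))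

end Euclidean

section Splitting

variable {n : ℕ} {A E G B : Matrix (Fin n) (Fin n) ℝ} {b xs : EuclideanSpace ℝ (Fin n)}

lemma mulV_eq_of_gaveF_eq_zero (hA : A = E - G) (hxs : gaveF A B b xs = 0) :
    mulV E xs = mulV G xs + mulV B (vabs xs) + b := by
  rw [gaveF, hA, mulV_sub_left] at hxs
  linear_combination (norm := module) hxs

lemma gaveF_eq_of_gaveF_eq_zero (hA : A = E - G) (hxs : gaveF A B b xs = 0)
    (y : EuclideanSpace ℝ (Fin n)) :
    gaveF A B b y = mulV E (y - xs) - mulV G (y - xs) - mulV B (vabs y - vabs xs) := by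
  rw [gaveF, hA, mulV_sub_left, mulV_sub, mulV_sub, mulV_sub,
    mulV_eq_of_gaveF_eq_zero hA hxs]
  abel

lemma norm_gaveF_le (hA : A = E - G) (hxs : gaveF A B b xs = 0) (y : EuclideanSpace ℝ (Fin n)) :
    ‖gaveF A B b y‖ ≤ (spec E + spec G + spec B) * ‖y - xs‖ :=
  calc ‖gaveF A B b y‖
      ≤ ‖mulV E (y - xs)‖ + ‖mulV G (y - xs)‖ + ‖mulV B (vabs y - vabs xs)‖ := by
        rw [gaveF_eq_of_gaveF_eq_zero hA hxs]
        exact (norm_sub_le _ _).trans (add_le_add_left (norm_sub_le _ _) _)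
    _ ≤ spec E * ‖y - xs‖ + spec G * ‖y - xs‖ + spec B * ‖y - xs‖ := by
        gcongr
        exacts [norm_mulV_le _ _, norm_mulV_le _ _, norm_mulV_vabs_sub_vabs_le _ _ _]
    _ = (spec E + spec G + spec B) * ‖y - xs‖ := by ring

lemma norm_sub_le_of_inexact_splitting_step (hA : A = E - G) (hE : IsUnit E)
    (hxs : gaveF A B b xs = 0) {θ : ℝ} (hθ : 0 ≤ θ) {y y' : EuclideanSpace ℝ (Fin n)}
    (hy : ‖mulV E y' - (mulV G y + mulV B (vabs y) + b)‖ ≤ θ * ‖gaveF A B b y‖) :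
    ‖y' - xs‖ ≤ spec E⁻¹ * (θ * (spec E + spec G + spec B) + spec G + spec B) * ‖y - xs‖ := by
  have herr : mulV E (y' - xs) = (mulV E y' - (mulV G y + mulV B (vabs y) + b))
      + mulV G (y - xs) + mulV B (vabs y - vabs xs) := by
    rw [mulV_sub, mulV_sub, mulV_sub, mulV_eq_of_gaveF_eq_zero hA hxs]
    abel
  have hres := hy.trans (mul_le_mul_of_nonneg_left (norm_gaveF_le hA hxs y) hθ)
  calc ‖y' - xs‖ = ‖mulV E⁻¹ (mulV E (y' - xs))‖ := by rw [mulV_nonsing_inv_mulV E hE]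
    _ ≤ spec E⁻¹ * ‖mulV E (y' - xs)‖ := norm_mulV_le _ _
    _ ≤ spec E⁻¹ * (θ * ((spec E + spec G + spec B) * ‖y - xs‖)
          + spec G * ‖y - xs‖ + spec B * ‖y - xs‖) := by
        gcongr
        · exact spec_nonneg _
        rw [herr]
        refine (norm_add_le _ _).trans (add_le_add ((norm_add_le _ _).trans ?_) ?_)
        exacts [add_le_add hres (norm_mulV_le _ _), norm_mulV_vabs_sub_vabs_le _ _ _]
    _ = spec E⁻¹ * (θ * (spec E + spec G + spec B) + spec G + spec B) * ‖y - xs‖ := by ring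

end Splitting

lemma convergesLinearlyTo_of_norm_sub_succ_le {n : ℕ} {x : ℕ → EuclideanSpace ℝ (Fin n)}
    {xs : EuclideanSpace ℝ (Fin n)} {c : ℝ} (hc0 : 0 ≤ c) (hc1 : c < 1)
    (hx : ∀ k, ‖x (k + 1) - xs‖ ≤ c * ‖x k - xs‖) : ConvergesLinearlyTo x xs := by
  have hgeom : ∀ k, ‖x k - xs‖ ≤ c ^ k * ‖x 0 - xs‖ := by
    intro k
    induction k with
    | zero => simp
    | succ k ih =>
      calc ‖x (k + 1) - xs‖ ≤ c * (c ^ k * ‖x 0 - xs‖) := (hx k).trans (by gcongr)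
        _ = c ^ (k + 1) * ‖x 0 - xs‖ := by ring
  refine ⟨⟨c, hc0, hc1, hx⟩, tendsto_iff_norm_sub_tendsto_zero.2 ?_⟩
  refine squeeze_zero (fun k => norm_nonneg _) hgeom ?_
  simpa using (tendsto_pow_atTop_nhds_zero_of_lt_one hc0 hc1).mul_const ‖x 0 - xs‖

theorem stmt2_general {n : ℕ} (A M N B Ω : Matrix (Fin n) (Fin n) ℝ)
    (b : EuclideanSpace ℝ (Fin n)) (hA : A = M - N) (θ : ℝ) (hθ0 : 0 ≤ θ)
    (hinv : IsUnit (Ω + M))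
    (xs : EuclideanSpace ℝ (Fin n)) (hxs : gaveF A B b xs = 0)
    (x : ℕ → EuclideanSpace ℝ (Fin n))
    (hx : ∀ k : ℕ, ‖mulV (Ω + M) (x (k + 1)) - (mulV (Ω + N) (x k) + mulV B (vabs (x k)) + b)‖ ≤
      θ * ‖gaveF A B b (x k)‖) :
    (∀ k : ℕ, ‖x (k + 1) - xs‖ ≤ spec (Ω + M)⁻¹ *
        (θ * (spec (Ω + M) + spec (Ω + N) + spec B) + spec (Ω + N) + spec B) * ‖x k - xs‖) ∧
      (spec (Ω + M)⁻¹ <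
          1 / (θ * (spec (Ω + M) + spec (Ω + N) + spec B) + spec (Ω + N) + spec B) →
        ConvergesLinearlyTo x xs) := by
  have hsplit : A = (Ω + M) - (Ω + N) := by rw [hA]; abel
  have hstep := fun k => norm_sub_le_of_inexact_splitting_step hsplit hinv hxs hθ0 (hx k)
  refine ⟨hstep, fun hlt => ?_⟩
  set d := θ * (spec (Ω + M) + spec (Ω + N) + spec B) + spec (Ω + N) + spec B
  have hd : 0 < d := one_div_pos.mp ((spec_nonneg _).trans_lt hlt)
  exact convergesLinearlyTo_of_norm_sub_succ_le (mul_nonneg (spec_nonneg _) hd.le)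
    ((lt_div_iff₀ hd).mp hlt) hstep

theorem stmt2 {n : ℕ} (A M N B Ω : Matrix (Fin n) (Fin n) ℝ)
    (b : EuclideanSpace ℝ (Fin n)) (hA : A = M - N) (θ : ℝ) (hθ0 : 0 ≤ θ) (hθ1 : θ < 1)
    (hinv : IsUnit (Ω + M))
    (xs : EuclideanSpace ℝ (Fin n)) (hxs : gaveF A B b xs = 0)
    (x : ℕ → EuclideanSpace ℝ (Fin n))
    (hx : ∀ k : ℕ, ‖mulV (Ω + M) (x (k + 1)) - (mulV (Ω + N) (x k) + mulV B (vabs (x k)) + b)‖ ≤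
      θ * ‖gaveF A B b (x k)‖) :
    (∀ k : ℕ, ‖x (k + 1) - xs‖ ≤ spec (Ω + M)⁻¹ *
        (θ * (spec (Ω + M) + spec (Ω + N) + spec B) + spec (Ω + N) + spec B) * ‖x k - xs‖) ∧
      (spec (Ω + M)⁻¹ <
          1 / (θ * (spec (Ω + M) + spec (Ω + N) + spec B) + spec (Ω + N) + spec B) →
        ConvergesLinearlyTo x xs) :=
  stmt2_general A M N B Ω b hA θ hθ0 hinv xs hxs x hx
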